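/- Let G be a group acting on types X and Y. For every natural number n there is a G-equivariant bijection between the n-th symmetric power Sym n (X ⊕ Y) of the disjoint union X ⊕ Y (with the G-action induced componentwise) and the disjoint union over i = 0, 1, …, n of the products Sym i X × Sym (n−i) Y, where G acts on each symmetric power by pushing forward multisets and acts diagonally on the products. -/

import Mathlib

/-!
A multiset on `α ⊕ β` is the disjoint sum of its left part and its right part, which gives
`Multiset (α ⊕ β) ≃ Multiset α × Multiset β`; sorting the elements of `Sym (α ⊕ β) n` by the
cardinality `i` of their left part turns this into `Sym (α ⊕ β) n ≃ Σ i, Sym α i × Sym β (n - i)`.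
Taking left and right parts commutes with `Sum.map f g` for arbitrary maps `f` and `g`, so the
bijection is equivariant for any pair of actions.
-/

namespace Multiset

variable {α β γ δ : Type*}

@[simp]
theorem filterMap_const_none (s : Multiset α) : s.filterMap (fun _ => (none : Option β)) = 0 :=
  Quot.inductionOn s fun _ => by simp

@[simp]
theorem filterMap_getLeft?_disjSum (s : Multiset α) (t : Multiset β) :
    (s.disjSum t).filterMap Sum.getLeft? = s := by
  simp [disjSum, filterMap_add, filterMap_map, Function.comp_def]

@[simp]
theorem filterMap_getRight?_disjSum (s : Multiset α) (t : Multiset β) :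
    (s.disjSum t).filterMap Sum.getRight? = t := by
  simp [disjSum, filterMap_add, filterMap_map, Function.comp_def]

theorem disjSum_filterMap_getLeft?_getRight? (m : Multiset (α ⊕ β)) :
    (m.filterMap Sum.getLeft?).disjSum (m.filterMap Sum.getRight?) = m := by
  induction m using Multiset.induction with
  | empty => simp
  | cons z m ih =>
    conv_rhs => rw [← ih]
    cases z <;> simp [filterMap_cons, disjSum]

@[simps]
def sumEquiv : Multiset (α ⊕ β) ≃ Multiset α × Multiset β where
  toFun m := (m.filterMap Sum.getLeft?, m.filterMap Sum.getRight?)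
  invFun p := p.1.disjSum p.2
  left_inv := disjSum_filterMap_getLeft?_getRight?
  right_inv p := by simp

theorem card_sumEquiv (m : Multiset (α ⊕ β)) :
    card (sumEquiv m).1 + card (sumEquiv m).2 = card m := by
  conv_rhs => rw [← sumEquiv.symm_apply_apply m]
  simp [card_disjSum]

theorem sumEquiv_map_sumMap (f : α → γ) (g : β → δ) (m : Multiset (α ⊕ β)) :
    sumEquiv (m.map (Sum.map f g)) = Prod.map (map f) (map g) (sumEquiv m) := by
  simp only [sumEquiv_apply, Prod.map, filterMap_map, map_filterMap]
  congr 2 <;> funext z <;> cases z <;> rfl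

end Multiset

namespace Sym

variable {α β γ δ : Type*}

theorem sigma_ext_coe {n : ℕ} {p q : Σ i : Fin (n + 1), Sym α i × Sym β (n - i)}
    (h₁ : p.1 = q.1) (h₂ : (p.2.1 : Multiset α) = q.2.1) (h₃ : (p.2.2 : Multiset β) = q.2.2) :
    p = q := by
  obtain ⟨i, s, t⟩ := p
  obtain ⟨j, s', t'⟩ := q
  obtain rfl : i = j := h₁
  obtain rfl := coe_injective h₂
  obtain rfl := coe_injective h₃
  rfl

def sumEquiv (n : ℕ) : Sym (α ⊕ β) n ≃ Σ i : Fin (n + 1), Sym α i × Sym β (n - i) where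
  toFun s :=
    have hs : Multiset.card (Multiset.sumEquiv (s : Multiset (α ⊕ β))).1 +
        Multiset.card (Multiset.sumEquiv (s : Multiset (α ⊕ β))).2 = n :=
      (Multiset.card_sumEquiv _).trans s.card_coe
    ⟨⟨Multiset.card (Multiset.sumEquiv (s : Multiset (α ⊕ β))).1, by omega⟩,
      ⟨(Multiset.sumEquiv (s : Multiset (α ⊕ β))).1, rfl⟩,
      ⟨(Multiset.sumEquiv (s : Multiset (α ⊕ β))).2, Nat.eq_sub_of_add_eq' hs⟩⟩
  invFun q := ⟨Multiset.sumEquiv.symm (q.2.1, q.2.2), by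
    simp only [Multiset.sumEquiv_symm_apply, Multiset.card_disjSum, card_coe]
    have := q.1.is_lt
    omega⟩
  left_inv s := coe_injective (Multiset.sumEquiv.symm_apply_apply s.1)
  right_inv q := sigma_ext_coe (by ext; simp) (by simp) (by simp)

theorem sumEquiv_map (f : α → γ) (g : β → δ) {n : ℕ} (s : Sym (α ⊕ β) n) :
    sumEquiv n (s.map (Sum.map f g)) =
      ⟨(sumEquiv n s).1, ((sumEquiv n s).2.1.map f, (sumEquiv n s).2.2.map g)⟩ := by
  have h := Multiset.sumEquiv_map_sumMap f g (s : Multiset (α ⊕ β))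
  refine sigma_ext_coe (Fin.ext ?_) ?_ ?_
  · exact (congrArg (Multiset.card ∘ Prod.fst) h).trans (Multiset.card_map _ _)
  · exact congrArg Prod.fst h
  · exact congrArg Prod.snd h

end Sym

/-- For a group `G` acting on types `X` and `Y`, and any `n : ℕ`, there is a
`G`-equivariant bijection `Sym (X ⊕ Y) n ≃ Σ i : Fin (n+1), Sym X i × Sym Y (n - i)`,
where `G` acts on `X ⊕ Y` componentwise (via `Sum.map`), on symmetric powers by
pushing forward multisets (`Sym.map`), and diagonally on products. -/
theorem sym_sum_equivariant_equiv {G X Y : Type*} [Group G] [MulAction G X] [MulAction G Y]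
    (n : ℕ) :
    ∃ e : Sym (X ⊕ Y) n ≃ (Σ i : Fin (n + 1), Sym X (i : ℕ) × Sym Y (n - (i : ℕ))),
      ∀ (g : G) (s : Sym (X ⊕ Y) n),
        e (Sym.map (Sum.map (fun x => g • x) (fun y => g • y)) s) =
          ⟨(e s).1, (Sym.map (fun x => g • x) (e s).2.1, Sym.map (fun y => g • y) (e s).2.2)⟩ :=
  ⟨Sym.sumEquiv n, fun g => Sym.sumEquiv_map (g • ·) (g • ·)⟩
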